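/- Let D be a probability distribution on a finite set X, with inner product ⟨φ,ψ⟩_D = E_D[φψ] and norm ‖φ‖_D = √⟨φ,φ⟩_D. Let f, ψ, g : X → ℝ with ‖g‖_D ≤ 1, and let γ be a real number with the same sign as ⟨f - ψ, g⟩_D such that |⟨f - ψ, g⟩_D - γ| ≤ τ and |γ| ≥ 3τ for some τ > 0. Then ‖f - ψ‖_D² - ‖f - (ψ + γ·g)‖_D² ≥ γ²/3 ≥ 3τ². -/
import Mathlib


open Finset

theorem update_step_progress {X : Type*} [Fintype X]
    (D : X → ℝ) (hD : ∀ x, 0 ≤ D x) (hD1 : ∑ x, D x = 1)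
    (f ψ g : X → ℝ) (γ τ : ℝ) (hτ : 0 < τ)
    (hg : ∑ x, D x * g x ^ 2 ≤ 1)
    (hsign : 0 ≤ γ * ∑ x, D x * ((f x - ψ x) * g x))
    (hest : |(∑ x, D x * ((f x - ψ x) * g x)) - γ| ≤ τ)
    (hγ : 3 * τ ≤ |γ|) :
    (∑ x, D x * (f x - ψ x) ^ 2) - (∑ x, D x * (f x - (ψ x + γ * g x)) ^ 2) ≥ γ ^ 2 / 3
      ∧ γ ^ 2 / 3 ≥ 3 * τ ^ 2 := by
  set B := ∑ x, D x * ((f x - ψ x) * g x) with hB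
  set C := ∑ x, D x * g x ^ 2 with hC
  have hexp : (∑ x, D x * (f x - (ψ x + γ * g x)) ^ 2)
      = (∑ x, D x * (f x - ψ x) ^ 2) - 2 * γ * B + γ ^ 2 * C := by
    rw [hB, hC, Finset.mul_sum, Finset.mul_sum, ← Finset.sum_sub_distrib, ← Finset.sum_add_distrib]
    apply Finset.sum_congr rfl
    intro x _
    ring
  have habs : |γ * (B - γ)| ≤ |γ| * τ := by
    rw [abs_mul]
    exact mul_le_mul_of_nonneg_left hest (abs_nonneg γ)
  have h1 : γ * B ≥ γ ^ 2 - |γ| * τ := by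
    have := neg_abs_le (γ * (B - γ))
    nlinarith [this, habs]
  have hτγ : |γ| * τ ≤ γ ^ 2 / 3 := by
    nlinarith [sq_abs γ, abs_nonneg γ]
  have hγ2 : γ ^ 2 ≥ 9 * τ ^ 2 := by nlinarith [sq_abs γ]
  have hC2 : γ ^ 2 * C ≤ γ ^ 2 := by nlinarith [sq_nonneg γ]
  constructor
  · rw [hexp]; nlinarith
  · linarith
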